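/- Let f : ℝ/ℤ → ℝⁿ be a closed curve satisfying the bi-Lipschitz condition with constants L₁, L₂, and let 0 ≤ θ₁ < … < θ_m < 1 satisfy the equilateral condition. Then for all sufficiently large m and all integers i, j with 1 ≤ |i − j| ≤ ⌊m/2⌋ (indices of vertices taken mod m), writing k = |i − j|: Aᵢ‖Δᵢʲf‖ ≥ (L_mL₁/L₂)·(k − ½)/m, Aᵢ‖Δᵢ^{j+1}f‖ ≥ (L_mL₁/L₂)·(k − ½)/m, A_{ij}‖Δᵢʲf‖ ≥ (L_mL₁/L₂)·(k − ¼)/m, and A_{ij}‖Δᵢ^{j+1}f‖ ≥ (L_mL₁/(2L₂))·k/m. -/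

import Mathlib

open MeasureTheory Real
open scoped RealInnerProductSpace ENNReal

noncomputable section

/-- The standard distance on `ℝ/ℤ`, expressed through real representatives. -/
def circleDist (a b : ℝ) : ℝ := min (Int.fract (a - b)) (1 - Int.fract (a - b))

/-- The `H^{1/2}`-seminorm `[u]_{H^{1/2}(I×J)}`. -/
def seminormH {n : ℕ} (u : ℝ → EuclideanSpace ℝ (Fin n)) (I J : Set ℝ) : ℝ :=
  Real.sqrt (∫ a in I, ∫ b in J, ‖u a - u b‖ ^ 2 / circleDist a b ^ 2)

/-- `K(u, ε)`: supremum of the `H^{1/2}`-seminorms of `u` over pairs of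
measurable subsets of `ℝ/ℤ` of measure at most `ε`. -/
def Kmod {n : ℕ} (u : ℝ → EuclideanSpace ℝ (Fin n)) (ε : ℝ) : ℝ :=
  sSup { r : ℝ | ∃ I J : Set ℝ, MeasurableSet I ∧ MeasurableSet J ∧
    I ⊆ Set.Ico (0 : ℝ) 1 ∧ J ⊆ Set.Ico (0 : ℝ) 1 ∧
    volume I ≤ ENNReal.ofReal ε ∧ volume J ≤ ENNReal.ofReal ε ∧
    r = seminormH u I J }

/-- Difference operator `Δᵢ` in the first index. -/
def dOpI (u : ℤ → ℤ → ℝ) (i j : ℤ) : ℝ := u (i + 1) j - u i j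

/-- Difference operator `Δⱼ` in the second index. -/
def dOpJ (u : ℤ → ℤ → ℝ) (i j : ℤ) : ℝ := u i (j + 1) - u i j

/-- Arithmetic mean `Aᵢ` in the first index. -/
def aOpI (u : ℤ → ℤ → ℝ) (i j : ℤ) : ℝ := (u i j + u (i + 1) j) / 2

/-- Arithmetic mean `Aⱼ` in the second index. -/
def aOpJ (u : ℤ → ℤ → ℝ) (i j : ℤ) : ℝ := (u i j + u i (j + 1)) / 2

/-- Arithmetic mean `A_{ij}` over the four corners. -/
def aOpIJ (u : ℤ → ℤ → ℝ) (i j : ℤ) : ℝ :=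
  (u i j + u (i + 1) j + u i (j + 1) + u (i + 1) (j + 1)) / 4

/-- The chord `Δᵢʲf = f(θⱼ) − f(θᵢ)`. -/
def chord {n : ℕ} (f : ℝ → EuclideanSpace ℝ (Fin n)) (θ : ℤ → ℝ) (i j : ℤ) :
    EuclideanSpace ℝ (Fin n) := f (θ j) - f (θ i)

/-- The edge `Δᵢf = f(θᵢ₊₁) − f(θᵢ)`. -/
def edge {n : ℕ} (f : ℝ → EuclideanSpace ℝ (Fin n)) (θ : ℤ → ℝ) (i : ℤ) :
    EuclideanSpace ℝ (Fin n) := f (θ (i + 1)) - f (θ i)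

/-- The unit edge vector `Δᵢf/‖Δᵢf‖`. -/
def uedge {n : ℕ} (f : ℝ → EuclideanSpace ℝ (Fin n)) (θ : ℤ → ℝ) (i : ℤ) :
    EuclideanSpace ℝ (Fin n) := ‖edge f θ i‖⁻¹ • edge f θ i

/-- Chord length `‖Δᵢʲf‖` as a doubly indexed quantity. -/
def chn {n : ℕ} (f : ℝ → EuclideanSpace ℝ (Fin n)) (θ : ℤ → ℝ) (i j : ℤ) : ℝ :=
  ‖chord f θ i j‖

/-!
The upper Lipschitz bound and the equal edge lengths `ℓ = L_m / m` force consecutive parameters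
to be at least `ℓ / L₂` apart, so the lower Lipschitz bound gives
`‖Δᵢʲf‖ ≥ (L₁ ℓ / L₂) · min(k, m - k)` for `|i - j| = k`. Averaging these bounds gives every
estimate except the one for `A_{ij}‖Δᵢʲf‖` when `m = 2k`, where one of the four chords may be
short. There the parallelogram law for `Δᵢʲf` and `Δᵢ₊₁ʲ⁺¹f`, whose difference is a difference of
two edges, recovers the bound as soon as `4 L₂² ≤ (2m - 1) L₁²`.
-/

section ChordBounds

variable {E : Type*}

theorem circleDist_eq_min_of_mem_Ico {x y : ℝ} (h : x - y ∈ Set.Ico (0 : ℝ) 1) :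
    circleDist x y = min (x - y) (1 - (x - y)) := by
  rw [circleDist, Int.fract_eq_self.mpr h]

theorem circleDist_le_sub {x y : ℝ} (h : y ≤ x) : circleDist x y ≤ x - y := by
  have hfloor : (0 : ℝ) ≤ ⌊x - y⌋ := by exact_mod_cast Int.floor_nonneg.mpr (sub_nonneg.mpr h)
  calc circleDist x y ≤ Int.fract (x - y) := min_le_left _ _
    _ = x - y - ⌊x - y⌋ := (Int.self_sub_floor _).symm
    _ ≤ x - y := by linarith

theorem norm_sub_le_mul_sub [SeminormedAddCommGroup E] {f : ℝ → E} {L₂ : ℝ} (hL₂ : 0 ≤ L₂)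
    (hub : ∀ a b, ‖f a - f b‖ ≤ L₂ * circleDist a b) {x y : ℝ} (h : y ≤ x) :
    ‖f x - f y‖ ≤ L₂ * (x - y) :=
  (hub x y).trans (mul_le_mul_of_nonneg_left (circleDist_le_sub h) hL₂)

theorem mul_le_sub_of_forall_le_sub_succ {θ : ℤ → ℝ} {β : ℝ}
    (hgap : ∀ l, β ≤ θ (l + 1) - θ l) {a b : ℤ} (hab : a ≤ b) :
    ((b - a : ℤ) : ℝ) * β ≤ θ b - θ a := by
  induction b, hab using Int.leInduction with
  | base => simp
  | succ b _ ih =>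
    have := hgap b
    push_cast at ih ⊢
    linarith

/-- The distance from `d` to `mℤ` when `|d| ≤ m`; for `|d| > m` it is negative, so lower bounds
`B * cycDist m d ≤ ‖…‖` with `0 ≤ B` hold there trivially. -/
def cycDist (m : ℕ) (d : ℤ) : ℤ := min |d| (m - |d|)

theorem cycDist_neg (m : ℕ) (d : ℤ) : cycDist m (-d) = cycDist m d := by
  simp only [cycDist, abs_neg]

theorem mul_cycDist_le_norm_sub [SeminormedAddCommGroup E] {f : ℝ → E}
    {θ : ℤ → ℝ} {m : ℕ} {L₁ β : ℝ} (hL₁ : 0 ≤ L₁) (hβ : 0 ≤ β)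
    (hlb : ∀ a b, L₁ * circleDist a b ≤ ‖f a - f b‖) (hθ : StrictMono θ)
    (hper : ∀ i : ℤ, θ (i + m) = θ i + 1) (hgap : ∀ l, β ≤ θ (l + 1) - θ l) (a b : ℤ) :
    L₁ * β * cycDist m (b - a) ≤ ‖f (θ b) - f (θ a)‖ := by
  wlog hab : a ≤ b generalizing a b
  · rw [norm_sub_rev, ← cycDist_neg, neg_sub]
    exact this b a (by omega)
  rcases lt_or_ge (b - a) m with hbm | hbm
  · have hlt : θ b - θ a < 1 := by
      have := hθ (show b < a + m by omega)
      rw [hper] at this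
      linarith
    have h₁ := mul_le_sub_of_forall_le_sub_succ hgap hab
    have h₂ := mul_le_sub_of_forall_le_sub_succ hgap (show b ≤ a + m by omega)
    rw [hper] at h₂
    have hcyc : (cycDist m (b - a) : ℝ) = min ((b - a : ℤ) : ℝ) (m - ((b - a : ℤ) : ℝ)) := by
      rw [cycDist, abs_of_nonneg (by omega)]
      norm_cast
    calc L₁ * β * cycDist m (b - a) ≤ L₁ * min (θ b - θ a) (1 - (θ b - θ a)) := by
          rw [mul_assoc, hcyc, mul_min_of_nonneg _ _ hβ]
          gcongr
          · linarith
          · push_cast at h₂ ⊢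
            linarith
      _ = L₁ * circleDist (θ b) (θ a) := by
          rw [circleDist_eq_min_of_mem_Ico ⟨sub_nonneg.mpr (hθ.monotone hab), hlt⟩]
      _ ≤ ‖f (θ b) - f (θ a)‖ := hlb _ _
  · have hcyc : (cycDist m (b - a) : ℝ) ≤ 0 := by
      have : cycDist m (b - a) ≤ 0 := by
        rw [cycDist, abs_of_nonneg (by omega)]
        omega
      exact_mod_cast this
    nlinarith [norm_nonneg (f (θ b) - f (θ a)), mul_nonneg hL₁ hβ]

theorem add_le_norm_add_norm_add_norm_add [NormedAddCommGroup E]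
    [InnerProductSpace ℝ E] {u v : E} {s t : ℝ} (hs : s ≤ ‖u‖ + ‖v‖)
    (hst : ‖u - v‖ ^ 2 + t ^ 2 ≤ s ^ 2) : s + t ≤ ‖u‖ + ‖v‖ + ‖u + v‖ := by
  have hpar := parallelogram_law_with_norm ℝ u v
  have := norm_nonneg u; have := norm_nonneg v; have := norm_nonneg (u + v)
  nlinarith [sq_nonneg (‖u‖ - ‖v‖)]

theorem mul_sub_half_le_aOpI [SeminormedAddCommGroup E] {p : ℤ → E} {m : ℕ} {B : ℝ}
    (hB : 0 ≤ B) (hchord : ∀ a b : ℤ, B * cycDist m (b - a) ≤ ‖p b - p a‖) {i j : ℤ}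
    (hkm : 2 * |i - j| ≤ m) :
    B * (|(i : ℝ) - j| - 1 / 2) ≤ aOpI (fun a b => ‖p b - p a‖) i j := by
  have hcyc : 2 * |i - j| - 1 ≤ cycDist m (j - i) + cycDist m (j - (i + 1)) := by
    simp only [cycDist, abs_eq_max_neg] at hkm ⊢
    omega
  have := mul_le_mul_of_nonneg_left (Int.cast_le (R := ℝ) |>.mpr hcyc) hB
  push_cast at this
  have := hchord i j
  have := hchord (i + 1) j
  simp only [aOpI]
  linarith

theorem mul_sub_half_le_aOpI_succ [SeminormedAddCommGroup E] {p : ℤ → E} {m : ℕ} {B : ℝ}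
    (hB : 0 ≤ B) (hchord : ∀ a b : ℤ, B * cycDist m (b - a) ≤ ‖p b - p a‖) {i j : ℤ}
    (hkm : 2 * |i - j| ≤ m) :
    B * (|(i : ℝ) - j| - 1 / 2) ≤ aOpI (fun a b => ‖p b - p a‖) i (j + 1) := by
  have hcyc : 2 * |i - j| - 1 ≤ cycDist m (j + 1 - i) + cycDist m (j + 1 - (i + 1)) := by
    simp only [cycDist, abs_eq_max_neg] at hkm ⊢
    omega
  have := mul_le_mul_of_nonneg_left (Int.cast_le (R := ℝ) |>.mpr hcyc) hB
  push_cast at this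
  have := hchord i (j + 1)
  have := hchord (i + 1) (j + 1)
  simp only [aOpI]
  linarith

theorem mul_half_le_aOpIJ_succ [SeminormedAddCommGroup E] {p : ℤ → E} {m : ℕ} {B : ℝ}
    (hB : 0 ≤ B) (hchord : ∀ a b : ℤ, B * cycDist m (b - a) ≤ ‖p b - p a‖) (hm : 3 ≤ m)
    {i j : ℤ} (hkm : 2 * |i - j| ≤ m) :
    B * |(i : ℝ) - j| / 2 ≤ aOpIJ (fun a b => ‖p b - p a‖) i (j + 1) := by
  have hcyc : 2 * |i - j| ≤ cycDist m (j + 1 - i) + cycDist m (j + 1 - (i + 1)) +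
      cycDist m (j + 1 + 1 - i) + cycDist m (j + 1 + 1 - (i + 1)) := by
    simp only [cycDist, abs_eq_max_neg] at hkm ⊢
    omega
  have := mul_le_mul_of_nonneg_left (Int.cast_le (R := ℝ) |>.mpr hcyc) hB
  push_cast at this
  have := hchord i (j + 1)
  have := hchord (i + 1) (j + 1)
  have := hchord i (j + 1 + 1)
  have := hchord (i + 1) (j + 1 + 1)
  simp only [aOpIJ]
  linarith

theorem mul_sub_quarter_le_aOpIJ [NormedAddCommGroup E] [InnerProductSpace ℝ E] {p : ℤ → E}
    {m : ℕ} {B ℓ : ℝ} (hB : 0 ≤ B) (hchord : ∀ a b : ℤ, B * cycDist m (b - a) ≤ ‖p b - p a‖)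
    (hedge : ∀ l, ‖p (l + 1) - p l‖ ≤ ℓ) (hℓ : 4 * ℓ ^ 2 ≤ (2 * m - 1) * B ^ 2) {i j : ℤ}
    (hkm : 2 * |i - j| ≤ m) :
    B * (|(i : ℝ) - j| - 1 / 4) ≤ aOpIJ (fun a b => ‖p b - p a‖) i j := by
  have h₁ := hchord i j
  have h₄ := hchord (i + 1) (j + 1)
  simp only [aOpIJ]
  by_cases hanti : 2 * |i - j| = m
  · have hcyc : cycDist m (j - i) = |i - j| ∧ cycDist m (j + 1 - (i + 1)) = |i - j| := by
      simp only [cycDist, abs_eq_max_neg] at hanti ⊢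
      omega
    rw [hcyc.1] at h₁
    rw [hcyc.2] at h₄
    push_cast at h₁ h₄
    have hm : (m : ℝ) = 2 * |(i : ℝ) - j| := by exact_mod_cast hanti.symm
    set k := |(i : ℝ) - j|
    have hsum : p j - p i + (p (j + 1) - p (i + 1)) = (p j - p (i + 1)) + (p (j + 1) - p i) := by
      abel
    have hdiff : p j - p i - (p (j + 1) - p (i + 1)) = (p (i + 1) - p i) - (p (j + 1) - p j) := by
      abel
    have hdiff_le : ‖p j - p i - (p (j + 1) - p (i + 1))‖ ≤ 2 * ℓ := by
      rw [hdiff]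
      linarith [norm_sub_le (p (i + 1) - p i) (p (j + 1) - p j), hedge i, hedge j]
    have key := add_le_norm_add_norm_add_norm_add (u := p j - p i) (v := p (j + 1) - p (i + 1))
      (s := 2 * B * k) (t := B * (2 * k - 1)) (by linarith)
      (by nlinarith [norm_nonneg (p j - p i - (p (j + 1) - p (i + 1)))])
    rw [hsum] at key
    linarith [norm_add_le (p j - p (i + 1)) (p (j + 1) - p i)]
  · have hcyc : 4 * |i - j| - 1 ≤ cycDist m (j - i) + cycDist m (j - (i + 1)) +
        cycDist m (j + 1 - i) + cycDist m (j + 1 - (i + 1)) := by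
      simp only [cycDist, abs_eq_max_neg] at hkm hanti ⊢
      omega
    have := mul_le_mul_of_nonneg_left (Int.cast_le (R := ℝ) |>.mpr hcyc) hB
    push_cast at this
    have := hchord (i + 1) j
    have := hchord i (j + 1)
    linarith

theorem four_mul_sq_le_mul_sq_of_div_le {L₁ L₂ M : ℝ} (hL₁ : 0 < L₁) (hL₂ : 0 < L₂)
    (h : 4 * L₂ ^ 2 / L₁ ^ 2 ≤ M) (ℓ : ℝ) : 4 * ℓ ^ 2 ≤ M * (L₁ * (ℓ / L₂)) ^ 2 := by
  rw [div_le_iff₀ (by positivity)] at h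
  calc 4 * ℓ ^ 2 = 4 * L₂ ^ 2 * (ℓ / L₂) ^ 2 := by field_simp
    _ ≤ M * L₁ ^ 2 * (ℓ / L₂) ^ 2 := by gcongr
    _ = M * (L₁ * (ℓ / L₂)) ^ 2 := by ring

end ChordBounds

theorem averaged_chord_lower_bounds_general (n : ℕ)
    (f : ℝ → EuclideanSpace ℝ (Fin n))
    (L₁ L₂ : ℝ) (hL₁ : 0 < L₁) (hL₁₂ : L₁ ≤ L₂)
    (hbl : ∀ a b : ℝ,
      L₁ * circleDist a b ≤ ‖f a - f b‖ ∧ ‖f a - f b‖ ≤ L₂ * circleDist a b)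
    (θ : ℕ → ℤ → ℝ)
    (hmono : ∀ m : ℕ, 1 ≤ m → StrictMono (θ m))
    (hθper : ∀ m : ℕ, 1 ≤ m → ∀ i : ℤ, θ m (i + m) = θ m i + 1)
    (Lm : ℕ → ℝ)
    (heq : ∀ m : ℕ, 1 ≤ m → ∀ i : ℤ, ‖edge f (θ m) i‖ = Lm m / m)
 :
    ∃ m₀ : ℕ, ∀ m : ℕ, m₀ ≤ m → ∀ i j : ℤ,
      1 ≤ |i - j| → |i - j| ≤ ((m / 2 : ℕ) : ℤ) →
      aOpI (chn f (θ m)) i j ≥ (Lm m * L₁ / L₂) * (|(i : ℝ) - (j : ℝ)| - 1 / 2) / m ∧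
      aOpI (chn f (θ m)) i (j + 1) ≥ (Lm m * L₁ / L₂) * (|(i : ℝ) - (j : ℝ)| - 1 / 2) / m ∧
      aOpIJ (chn f (θ m)) i j ≥ (Lm m * L₁ / L₂) * (|(i : ℝ) - (j : ℝ)| - 1 / 4) / m ∧
      aOpIJ (chn f (θ m)) i (j + 1) ≥
        (Lm m * L₁ / (2 * L₂)) * |(i : ℝ) - (j : ℝ)| / m := by
  obtain ⟨N, hN⟩ := exists_nat_ge (4 * L₂ ^ 2 / L₁ ^ 2)
  refine ⟨N + 3, fun m hm i j _ hkm => ?_⟩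
  have hm₁ : 1 ≤ m := by omega
  have hL₂ : 0 < L₂ := hL₁.trans_le hL₁₂
  set ℓ := Lm m / m
  have hedge : ∀ l, ‖f (θ m (l + 1)) - f (θ m l)‖ = ℓ := heq m hm₁
  have hℓ : 0 ≤ ℓ := hedge 0 ▸ norm_nonneg _
  have hgap : ∀ l, ℓ / L₂ ≤ θ m (l + 1) - θ m l := fun l =>
    (div_le_iff₀' hL₂).mpr <| hedge l ▸ norm_sub_le_mul_sub hL₂.le (fun a b => (hbl a b).2)
      ((hmono m hm₁).monotone (by omega))
  set B := L₁ * (ℓ / L₂)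
  have hB : 0 ≤ B := by positivity
  have hchord := mul_cycDist_le_norm_sub hL₁.le (by positivity) (fun a b => (hbl a b).1)
    (hmono m hm₁) (hθper m hm₁) hgap
  have hℓB : 4 * ℓ ^ 2 ≤ (2 * m - 1) * B ^ 2 := by
    have hNm : (N : ℝ) + 3 ≤ m := by exact_mod_cast hm
    exact four_mul_sq_le_mul_sq_of_div_le hL₁ hL₂ (hN.trans (by linarith)) ℓ
  have hkm' : 2 * |i - j| ≤ m := by omega
  have hscale : ∀ x : ℝ, Lm m * L₁ / L₂ * x / m = B * x := fun x => by ring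
  refine ⟨?_, ?_, ?_, ?_⟩
  · rw [ge_iff_le, hscale]
    exact mul_sub_half_le_aOpI hB hchord hkm'
  · rw [ge_iff_le, hscale]
    exact mul_sub_half_le_aOpI_succ hB hchord hkm'
  · rw [ge_iff_le, hscale]
    exact mul_sub_quarter_le_aOpIJ hB hchord (fun l => (hedge l).le) hℓB hkm'
  · rw [ge_iff_le, show Lm m * L₁ / (2 * L₂) * |(i : ℝ) - j| / m = B * |(i : ℝ) - j| / 2 by ring]
    exact mul_half_le_aOpIJ_succ hB hchord (by omega) hkm'

/-- Lower bounds for averaged chord lengths of equilateral inscribed polygons of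
a bi-Lipschitz closed curve (Lemma 3 of the paper). -/
theorem averaged_chord_lower_bounds (n : ℕ)
    (f : ℝ → EuclideanSpace ℝ (Fin n))
    (hf_per : ∀ x : ℝ, f (x + 1) = f x)
    (L₁ L₂ : ℝ) (hL₁ : 0 < L₁) (hL₁₂ : L₁ ≤ L₂)
    (hbl : ∀ a b : ℝ,
      L₁ * circleDist a b ≤ ‖f a - f b‖ ∧ ‖f a - f b‖ ≤ L₂ * circleDist a b)
    (θ : ℕ → ℤ → ℝ)
    (hmono : ∀ m : ℕ, 1 ≤ m → StrictMono (θ m))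
    (hθper : ∀ m : ℕ, 1 ≤ m → ∀ i : ℤ, θ m (i + m) = θ m i + 1)
    (hθ0 : ∀ m : ℕ, 1 ≤ m → 0 ≤ θ m 1)
    (hθ1 : ∀ m : ℕ, 1 ≤ m → θ m (m : ℤ) < 1)
    (Lm : ℕ → ℝ)
    (hLm : ∀ m : ℕ, Lm m = ∑ i ∈ Finset.Icc (1 : ℤ) (m : ℤ), ‖edge f (θ m) i‖)
    (heq : ∀ m : ℕ, 1 ≤ m → ∀ i : ℤ, ‖edge f (θ m) i‖ = Lm m / m)
 :
    ∃ m₀ : ℕ, ∀ m : ℕ, m₀ ≤ m → ∀ i j : ℤ,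
      1 ≤ |i - j| → |i - j| ≤ ((m / 2 : ℕ) : ℤ) →
      aOpI (chn f (θ m)) i j ≥ (Lm m * L₁ / L₂) * (|(i : ℝ) - (j : ℝ)| - 1 / 2) / m ∧
      aOpI (chn f (θ m)) i (j + 1) ≥ (Lm m * L₁ / L₂) * (|(i : ℝ) - (j : ℝ)| - 1 / 2) / m ∧
      aOpIJ (chn f (θ m)) i j ≥ (Lm m * L₁ / L₂) * (|(i : ℝ) - (j : ℝ)| - 1 / 4) / m ∧
      aOpIJ (chn f (θ m)) i (j + 1) ≥
        (Lm m * L₁ / (2 * L₂)) * |(i : ℝ) - (j : ℝ)| / m :=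
  averaged_chord_lower_bounds_general n f L₁ L₂ hL₁ hL₁₂ hbl θ hmono hθper Lm heq

end
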